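/- For every real μ ∈ [0,1], the influence functional of infinite lexicographic functions satisfies I(1/2 + μ/4) = 1 + I(μ)/4 and I(1/2 − μ/4) = 1 + I(μ)/4, where I(μ) = Σ_i (k_i − 2i)·2^{1−k_i} over the binary expansion μ = Σ_i 2^{−k_i}. -/

import Mathlib

/-!
Write `b` for the binary digits of `μ`, `O_k(d)` for the number of ones among `d_0, …, d_{k-1}`
and `S_a(d) = Σ_k d_k (k + a - 2 O_k(d)) 2^{1-k}`, so that `I(μ) = S_0(b)`.

The digits of `1/2 + μ/4` are `0, 1` followed by `b`, and those of `1/2 - μ/4` (for `μ > 0`) are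
`0, 0` followed by the digits `c` of the upper expansion of `μ` (those of `⌈μ 2^k⌉`). Since
`S_0(0, e, d) = e + S_{2-2e}(d) / 4`, the first identity is immediate and the second reduces to
`S_2(c) = 4 + S_0(b)`.

Where `μ 2^k` is not an integer, `c_k = 1 - b_k`. If this holds for all `k < n`, a telescoping
induction shows that the first `n` summands of `S_2(c) - S_0(b)` add up to
`4 - (2 - 2n + 4 O_n(b)) 2^{1-n}`; letting `n → ∞` settles non-dyadic `μ`. For `μ = m / 2^K` with
`m` odd both expansions end at position `K` with the digit `1`, and the difference of the two
summands there is exactly the remainder term at `n = K`.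
-/

noncomputable section

/-- The k-th binary digit of μ (k ≥ 1 are the fractional positions). -/
def binBit (μ : ℝ) (k : ℕ) : ℕ := (⌊μ * 2 ^ k⌋).toNat % 2

/-- Number of 1-bits of μ at positions strictly before k. -/
def onesBefore (μ : ℝ) (k : ℕ) : ℕ := ∑ j ∈ Finset.range k, binBit μ j

/-- Total influence of the infinite lexicographic function ℓ⟨μ⟩:
if μ = Σ_i 2^{-k_i} with 1 ≤ k_0 < k_1 < ⋯ the positions of the 1-bits,
this equals Σ_i (k_i − 2i) · 2^{1−k_i}. -/
def lexInfluence (μ : ℝ) : ℝ :=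
  ∑' k : ℕ, (binBit μ k : ℝ) * ((k : ℝ) - 2 * (onesBefore μ k : ℝ)) * (2 : ℝ) ^ (1 - (k : ℤ))

open Finset Filter Topology

def influenceTerm (a : ℝ) (b : ℕ → ℕ) (k : ℕ) : ℝ :=
  b k * (k + a - 2 * ((∑ j ∈ range k, b j : ℕ) : ℝ)) * (2 : ℝ) ^ (1 - (k : ℤ))

lemma lexInfluence_eq_tsum_influenceTerm (μ : ℝ) :
    lexInfluence μ = ∑' k, influenceTerm 0 (binBit μ) k := by
  simp [lexInfluence, influenceTerm, onesBefore]

lemma two_zpow_one_sub (k : ℕ) : (2 : ℝ) ^ (1 - (k : ℤ)) = 2 * (1 / 2) ^ k := by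
  rw [zpow_sub₀ two_ne_zero, zpow_one, zpow_natCast, one_div_pow, div_eq_mul_one_div]

lemma sum_range_le_of_le_one {b : ℕ → ℕ} (hb : ∀ k, b k ≤ 1) (n : ℕ) :
    ∑ j ∈ range n, b j ≤ n := by
  simpa using sum_le_card_nsmul (range n) b 1 fun j _ => hb j

lemma cast_sum_range_of_complement {b c : ℕ → ℕ} {n : ℕ} (h : ∀ k < n, c k + b k = 1) :
    ∑ j ∈ range n, (c j : ℝ) = n - ∑ j ∈ range n, (b j : ℝ) := by
  have hsum : ∑ j ∈ range n, (c j + b j) = n := by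
    simp [sum_congr rfl fun k hk => h k (mem_range.1 hk)]
  rw [sum_add_distrib] at hsum
  rw [eq_sub_iff_add_eq]
  exact_mod_cast hsum

lemma summable_influenceTerm (a : ℝ) {b : ℕ → ℕ} (hb : ∀ k, b k ≤ 1) :
    Summable (influenceTerm a b) := by
  have hg : Summable fun k : ℕ => (3 * k + |a|) * (2 * (1 / 2 : ℝ) ^ k) := by
    have h1 := summable_pow_mul_geometric_of_norm_lt_one 1 (r := (1 / 2 : ℝ)) (by norm_num)
    refine ((h1.mul_left 6).add (summable_geometric_two.mul_left (2 * |a|))).congr fun k => ?_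
    ring
  refine Summable.of_norm_bounded hg fun k => ?_
  have hbk : (b k : ℝ) ≤ 1 := by exact_mod_cast hb k
  have hO : ((∑ j ∈ range k, b j : ℕ) : ℝ) ≤ k := by exact_mod_cast sum_range_le_of_le_one hb k
  have hcoef : |(k + a - 2 * ((∑ j ∈ range k, b j : ℕ) : ℝ))| ≤ 3 * k + |a| :=
    have hO0 := (∑ j ∈ range k, b j : ℕ).cast_nonneg (α := ℝ)
    abs_le.2 ⟨by linarith [neg_abs_le a], by linarith [le_abs_self a, k.cast_nonneg (α := ℝ)]⟩
  rw [Real.norm_eq_abs, influenceTerm, two_zpow_one_sub, abs_mul, abs_mul,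
    abs_of_nonneg (b k).cast_nonneg, abs_of_pos (by positivity : (0 : ℝ) < 2 * (1 / 2) ^ k)]
  calc (b k : ℝ) * |(k + a - 2 * ((∑ j ∈ range k, b j : ℕ) : ℝ))| * (2 * (1 / 2) ^ k)
      ≤ 1 * (3 * k + |a|) * (2 * (1 / 2) ^ k) := by gcongr
    _ = _ := by ring

lemma tsum_influenceTerm_of_shift_two {b b' : ℕ → ℕ} {e : ℕ} (hb' : ∀ k, b' k ≤ 1)
    (h0 : b' 0 = 0) (h1 : b' 1 = e) (hshift : ∀ k, b' (k + 2) = b k) :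
    ∑' k, influenceTerm 0 b' k = e + (∑' k, influenceTerm (2 - 2 * e) b k) / 4 := by
  have hO : ∀ k, ∑ j ∈ range (k + 2), b' j = e + ∑ j ∈ range k, b j := fun k => by
    rw [sum_range_succ', sum_range_succ']
    simp only [hshift, h0, h1]
    ring
  have hterm : ∀ k, influenceTerm 0 b' (k + 2) = influenceTerm (2 - 2 * e) b k / 4 := fun k => by
    simp only [influenceTerm, hshift, hO, two_zpow_one_sub]
    push_cast
    ring
  rw [← (summable_influenceTerm 0 hb').sum_add_tsum_nat_add 2, tsum_congr hterm, tsum_div_const]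
  simp [influenceTerm, sum_range_succ, h0, h1]

lemma sum_influenceTerm_two_sub_of_complement {b c : ℕ → ℕ} {n : ℕ}
    (h : ∀ k < n, c k + b k = 1) :
    ∑ k ∈ range n, (influenceTerm 2 c k - influenceTerm 0 b k) =
      4 - (2 - 2 * n + 4 * ∑ j ∈ range n, (b j : ℝ)) * 2 ^ (1 - (n : ℤ)) := by
  induction n with
  | zero => norm_num
  | succ n ih =>
    have hcn : (c n : ℝ) = 1 - b n := by
      rw [eq_sub_iff_add_eq]; exact_mod_cast h n n.lt_succ_self
    rw [sum_range_succ, ih fun k hk => h k (hk.trans n.lt_succ_self)]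
    simp only [influenceTerm, two_zpow_one_sub, sum_range_succ, pow_succ]
    push_cast
    rw [cast_sum_range_of_complement fun k hk => h k (hk.trans n.lt_succ_self), hcn]
    ring

lemma tsum_influenceTerm_two_of_complement {b c : ℕ → ℕ} (h : ∀ k, c k + b k = 1) :
    ∑' k, influenceTerm 2 c k = 4 + ∑' k, influenceTerm 0 b k := by
  have hb : ∀ k, b k ≤ 1 := fun k => by have := h k; omega
  have hc : ∀ k, c k ≤ 1 := fun k => by have := h k; omega
  have hpartial := ((summable_influenceTerm 2 hc).hasSum.sub
    (summable_influenceTerm 0 hb).hasSum).tendsto_sum_nat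
  have hrem : Tendsto (fun n : ℕ => (2 - 2 * n + 4 * ∑ j ∈ range n, (b j : ℝ)) *
      (2 : ℝ) ^ (1 - (n : ℤ))) atTop (𝓝 0) := by
    have hlim : Tendsto (fun n : ℕ => 4 * (1 / 2 : ℝ) ^ n + 4 * (n * (1 / 2 : ℝ) ^ n))
        atTop (𝓝 0) := by
      have hpow := tendsto_pow_atTop_nhds_zero_of_lt_one (r := (1 / 2 : ℝ)) (by norm_num)
        (by norm_num)
      have hself := tendsto_self_mul_const_pow_of_lt_one (r := (1 / 2 : ℝ)) (by norm_num)
        (by norm_num)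
      simpa using (hpow.const_mul 4).add (hself.const_mul 4)
    refine squeeze_zero_norm (fun n => ?_) hlim
    have hO : ∑ j ∈ range n, (b j : ℝ) ≤ n := by exact_mod_cast sum_range_le_of_le_one hb n
    have hO' : 0 ≤ ∑ j ∈ range n, (b j : ℝ) := by positivity
    rw [Real.norm_eq_abs, two_zpow_one_sub, abs_mul,
      abs_of_pos (by positivity : (0 : ℝ) < 2 * (1 / 2) ^ n)]
    have : |2 - 2 * (n : ℝ) + 4 * ∑ j ∈ range n, (b j : ℝ)| ≤ 2 + 2 * n :=
      abs_le.2 ⟨by linarith, by linarith⟩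
    nlinarith [pow_pos (by norm_num : (0 : ℝ) < 1 / 2) n]
  have h4 : Tendsto (fun n => ∑ k ∈ range n, (influenceTerm 2 c k - influenceTerm 0 b k))
      atTop (𝓝 4) := by
    simpa [sum_influenceTerm_two_sub_of_complement fun k _ => h k] using hrem.const_sub 4
  linarith [tendsto_nhds_unique hpartial h4]

lemma tsum_influenceTerm_two_of_complement_lt {b c : ℕ → ℕ} {K : ℕ}
    (hlt : ∀ k < K, c k + b k = 1) (hge : ∀ k, K ≤ k → c k = b k) (hbK : b K = 1)
    (hb : ∀ k, K < k → b k = 0) :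
    ∑' k, influenceTerm 2 c k = 4 + ∑' k, influenceTerm 0 b k := by
  have hfinite : ∀ {a : ℝ} {d : ℕ → ℕ}, (∀ k, K < k → d k = 0) →
      ∑' k, influenceTerm a d k = ∑ k ∈ range (K + 1), influenceTerm a d k := fun hd =>
    tsum_eq_sum fun k hk => by simp [influenceTerm, hd k (by simpa [Nat.lt_succ_iff] using hk)]
  rw [hfinite fun k hk => (hge k hk.le).trans (hb k hk), hfinite hb]
  refine eq_add_of_sub_eq ?_
  rw [← sum_sub_distrib, sum_range_succ, sum_influenceTerm_two_sub_of_complement hlt]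
  simp only [influenceTerm, hge K le_rfl, hbK]
  push_cast
  rw [cast_sum_range_of_complement hlt]
  ring

lemma binBit_le_one (x : ℝ) (k : ℕ) : binBit x k ≤ 1 :=
  Nat.le_of_lt_succ (Nat.mod_lt _ two_pos)

lemma binBit_half_add_quarter_zero {μ : ℝ} (h0 : 0 ≤ μ) (h1 : μ ≤ 1) :
    binBit (1 / 2 + μ / 4) 0 = 0 := by
  have : ⌊1 / 2 + μ / 4⌋ = 0 := Int.floor_eq_zero_iff.2 ⟨by linarith, by linarith⟩
  rw [binBit, pow_zero, mul_one, this]; rfl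

lemma binBit_half_add_quarter_one {μ : ℝ} (h0 : 0 ≤ μ) (h1 : μ ≤ 1) :
    binBit (1 / 2 + μ / 4) 1 = 1 := by
  have : ⌊(1 / 2 + μ / 4) * 2⌋ = 1 :=
    Int.floor_eq_iff.2 ⟨by push_cast; linarith, by push_cast; linarith⟩
  rw [binBit, pow_one, this]; rfl

lemma binBit_half_add_quarter_add_two {μ : ℝ} (h0 : 0 ≤ μ) (k : ℕ) :
    binBit (1 / 2 + μ / 4) (k + 2) = binBit μ k := by
  have hfloor : ⌊(1 / 2 + μ / 4) * 2 ^ (k + 2)⌋ = ⌊μ * 2 ^ k⌋ + 2 * 2 ^ k := by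
    rw [← Int.floor_add_intCast]; push_cast; ring_nf
  have hnonneg : 0 ≤ ⌊μ * 2 ^ k⌋ := Int.floor_nonneg.2 (by positivity)
  have hpow : (0 : ℤ) ≤ 2 ^ k := by positivity
  unfold binBit
  rw [hfloor]
  omega

lemma binBit_half_sub_quarter_zero {μ : ℝ} (h0 : 0 ≤ μ) (h1 : μ ≤ 1) :
    binBit (1 / 2 - μ / 4) 0 = 0 := by
  have : ⌊1 / 2 - μ / 4⌋ = 0 := Int.floor_eq_zero_iff.2 ⟨by linarith, by linarith⟩
  rw [binBit, pow_zero, mul_one, this]; rfl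

lemma binBit_half_sub_quarter_one {μ : ℝ} (h0 : 0 < μ) (h1 : μ ≤ 1) :
    binBit (1 / 2 - μ / 4) 1 = 0 := by
  have : ⌊(1 / 2 - μ / 4) * 2⌋ = 0 := Int.floor_eq_zero_iff.2 ⟨by linarith, by linarith⟩
  rw [binBit, pow_one, this]; rfl

lemma floor_half_sub_quarter_mul_two_pow (μ : ℝ) (k : ℕ) :
    ⌊(1 / 2 - μ / 4) * 2 ^ (k + 2)⌋ = 2 * 2 ^ k - ⌈μ * 2 ^ k⌉ := by
  have : (1 / 2 - μ / 4) * 2 ^ (k + 2) = -(μ * 2 ^ k) + ((2 * 2 ^ k : ℤ) : ℝ) := by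
    push_cast; ring
  rw [this, Int.floor_add_intCast, Int.floor_neg]
  ring

lemma binBit_half_sub_quarter_add_two_of_mem {μ : ℝ} (h0 : 0 ≤ μ) (h1 : μ ≤ 1) {k : ℕ}
    (hk : μ * 2 ^ k ∈ Set.range ((↑) : ℤ → ℝ)) :
    binBit (1 / 2 - μ / 4) (k + 2) = binBit μ k := by
  obtain ⟨m, hm⟩ := hk
  have hm0 : 0 ≤ m := by exact_mod_cast hm ▸ (by positivity : 0 ≤ μ * 2 ^ k)
  have hmk : m ≤ 2 ^ k := by
    exact_mod_cast hm ▸ (mul_le_of_le_one_left (by positivity) h1 : μ * 2 ^ k ≤ 2 ^ k)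
  unfold binBit
  rw [floor_half_sub_quarter_mul_two_pow, ← hm, Int.floor_intCast, Int.ceil_intCast]
  omega

lemma binBit_half_sub_quarter_add_two_add_binBit {μ : ℝ} (h0 : 0 ≤ μ) (h1 : μ ≤ 1) {k : ℕ}
    (hk : μ * 2 ^ k ∉ Set.range ((↑) : ℤ → ℝ)) :
    binBit (1 / 2 - μ / 4) (k + 2) + binBit μ k = 1 := by
  have hceil := (Int.ceil_eq_floor_add_one_iff_notMem _).2 hk
  have hnonneg : 0 ≤ ⌊μ * 2 ^ k⌋ := Int.floor_nonneg.2 (by positivity)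
  have hle : ⌈μ * 2 ^ k⌉ ≤ 2 ^ k := Int.ceil_le.2 (by
    push_cast; exact mul_le_of_le_one_left (by positivity) h1)
  unfold binBit
  rw [floor_half_sub_quarter_mul_two_pow]
  omega

lemma mul_two_pow_eq_of_le {x : ℝ} {K k : ℕ} {m : ℤ} (h : x * 2 ^ K = m) (hk : K ≤ k) :
    x * 2 ^ k = ((m * 2 ^ (k - K) : ℤ) : ℝ) := by
  obtain ⟨d, rfl⟩ := Nat.exists_eq_add_of_le hk
  rw [Nat.add_sub_cancel_left, pow_add, ← mul_assoc, h]
  push_cast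
  rfl

lemma binBit_eq_zero_of_lt {x : ℝ} {K k : ℕ} {m : ℤ} (hm : 0 ≤ m) (h : x * 2 ^ K = m)
    (hk : K < k) : binBit x k = 0 := by
  have hpow : (2 : ℤ) ^ (k - K) = 2 * 2 ^ (k - K - 1) := by
    rw [← pow_succ']; congr 1; omega
  have hpos : (0 : ℤ) ≤ 2 ^ (k - K - 1) := by positivity
  have hprod : 0 ≤ m * 2 ^ (k - K - 1) := mul_nonneg hm hpos
  unfold binBit
  rw [mul_two_pow_eq_of_le h hk.le, Int.floor_intCast, hpow, mul_left_comm]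
  omega

lemma binBit_eq_one_of_odd {x : ℝ} {K : ℕ} {m : ℤ} (hm : Odd m) (hm0 : 0 ≤ m)
    (h : x * 2 ^ K = m) : binBit x K = 1 := by
  obtain ⟨t, rfl⟩ := hm
  unfold binBit
  rw [h, Int.floor_intCast]
  omega

lemma odd_of_forall_lt_notMem {x : ℝ} (h0 : 0 < x) (h1 : x ≤ 1) {K : ℕ} {m : ℤ}
    (h : x * 2 ^ K = m) (hmin : ∀ k < K, x * 2 ^ k ∉ Set.range ((↑) : ℤ → ℝ)) : Odd m := by
  rcases Int.even_or_odd m with ⟨t, rfl⟩ | hodd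
  · exfalso
    cases K with
    | zero =>
      have hx : x = t + t := by simpa using h
      rw [hx] at h0 h1
      have : (0 : ℤ) < t + t := by exact_mod_cast h0
      have : t + t ≤ (1 : ℤ) := by exact_mod_cast h1
      omega
    | succ K =>
      exact hmin K K.lt_succ_self ⟨t, by push_cast at h; rw [pow_succ] at h; linarith⟩
  · exact hodd

lemma tsum_influenceTerm_two_half_sub_quarter {μ : ℝ} (h0 : 0 < μ) (h1 : μ ≤ 1) :
    ∑' k, influenceTerm 2 (fun k => binBit (1 / 2 - μ / 4) (k + 2)) k =
      4 + ∑' k, influenceTerm 0 (binBit μ) k := by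
  by_cases hdyadic : ∃ K : ℕ, μ * 2 ^ K ∈ Set.range ((↑) : ℤ → ℝ)
  · classical
    obtain ⟨m, hm⟩ := Nat.find_spec hdyadic
    have hmin : ∀ k < Nat.find hdyadic, μ * 2 ^ k ∉ Set.range ((↑) : ℤ → ℝ) :=
      fun k hk => Nat.find_min hdyadic hk
    have hm0 : 0 ≤ m := by exact_mod_cast hm ▸ (by positivity : 0 ≤ μ * 2 ^ Nat.find hdyadic)
    exact tsum_influenceTerm_two_of_complement_lt
      (fun k hk => binBit_half_sub_quarter_add_two_add_binBit h0.le h1 (hmin k hk))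
      (fun k hk => binBit_half_sub_quarter_add_two_of_mem h0.le h1
        ⟨_, (mul_two_pow_eq_of_le hm.symm hk).symm⟩)
      (binBit_eq_one_of_odd (odd_of_forall_lt_notMem h0 h1 hm.symm hmin) hm0 hm.symm)
      (fun k hk => binBit_eq_zero_of_lt hm0 hm.symm hk)
  · simp only [not_exists] at hdyadic
    exact tsum_influenceTerm_two_of_complement fun k =>
      binBit_half_sub_quarter_add_two_add_binBit h0.le h1 (hdyadic k)

theorem lexInfluence_half_add_quarter {μ : ℝ} (h0 : 0 ≤ μ) (h1 : μ ≤ 1) :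
    lexInfluence (1 / 2 + μ / 4) = 1 + lexInfluence μ / 4 := by
  rw [lexInfluence_eq_tsum_influenceTerm, lexInfluence_eq_tsum_influenceTerm,
    tsum_influenceTerm_of_shift_two (binBit_le_one _) (binBit_half_add_quarter_zero h0 h1)
      (binBit_half_add_quarter_one h0 h1) (binBit_half_add_quarter_add_two h0)]
  norm_num

theorem lexInfluence_half_sub_quarter {μ : ℝ} (h0 : 0 ≤ μ) (h1 : μ ≤ 1) :
    lexInfluence (1 / 2 - μ / 4) = 1 + lexInfluence μ / 4 := by
  rcases h0.eq_or_lt with rfl | hpos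
  · simpa using lexInfluence_half_add_quarter le_rfl zero_le_one
  rw [lexInfluence_eq_tsum_influenceTerm, lexInfluence_eq_tsum_influenceTerm,
    tsum_influenceTerm_of_shift_two (binBit_le_one _) (binBit_half_sub_quarter_zero h0 h1)
      (binBit_half_sub_quarter_one hpos h1) fun k => rfl]
  simp only [Nat.cast_zero, mul_zero, sub_zero, zero_add,
    tsum_influenceTerm_two_half_sub_quarter hpos h1]
  ring

theorem lexInfluence_half_shift (μ : ℝ) (h0 : 0 ≤ μ) (h1 : μ ≤ 1) :
    lexInfluence (1 / 2 + μ / 4) = 1 + lexInfluence μ / 4 ∧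
    lexInfluence (1 / 2 - μ / 4) = 1 + lexInfluence μ / 4 :=
  ⟨lexInfluence_half_add_quarter h0 h1, lexInfluence_half_sub_quarter h0 h1⟩
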